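/- arXiv:1507.06483 — 13 statements merged into one kernel-verified Lean document; each statement's English description precedes it below -/
import Mathlib

section
/- Let G be the generating function of an integer-valued random variable N with P(N=0)=P(N=1)=0, i.e. G(s) = Σ_{z≥2} q_z s^z with q_z ≥ 0 and Σ_{z≥2} q_z = 1. For an integer k ≥ 1, define f_k(x) = G(1-(k-1)x) - G(1-kx) for x ∈ (0, 1/k]. Then f_k has exactly one fixed point in the interval (0, 1/k]. -/
set_option maxHeartbeats 800000

open Finset

/-- the map `f_k(x) = G(1-(k-1)x) - G(1-kx)`, where
`G(s) = ∑_{z≥2} q_z s^z` is the generating function of a probability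
distribution `q` supported on `{2,3,...}`, has exactly one fixed point
in `(0, 1/k]`. -/
theorem stmt_0 (q : ℕ → ℝ) (hq0 : q 0 = 0) (hq1 : q 1 = 0)
    (hqnn : ∀ z, 0 ≤ q z) (hqsum : Summable q) (hq1sum : ∑' z, q z = 1)
    (k : ℕ) (hk : 1 ≤ k) :
    ∃! x : ℝ, x ∈ Set.Ioc (0 : ℝ) (1 / k) ∧
      (∑' z : ℕ, q z * (1 - ((k : ℝ) - 1) * x) ^ z)
        - (∑' z : ℕ, q z * (1 - (k : ℝ) * x) ^ z) = x := by
  have hc1 : (1:ℝ) ≤ (k:ℝ) := by exact_mod_cast hk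
  set c : ℝ := (k:ℝ) with hcdef
  have hc0 : (0:ℝ) < c := lt_of_lt_of_le one_pos hc1
  have hcne : c ≠ 0 := ne_of_gt hc0
  have hik0 : (0:ℝ) < 1/c := div_pos one_pos hc0
  have hik1 : (1:ℝ)/c ≤ 1 := by rw [div_le_one hc0]; exact hc1
  -- basic bounds
  have hbnds : ∀ x ∈ Set.Icc (0:ℝ) (1/c),
      0 ≤ 1 - c*x ∧ 1 - c*x ≤ 1 - (c-1)*x ∧ 1 - (c-1)*x ≤ 1 := by
    rintro x ⟨hx0, hx1⟩
    have hcx : c * x ≤ 1 := by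
      have := mul_le_mul_of_nonneg_left hx1 hc0.le
      rwa [mul_one_div, div_self hcne] at this
    exact ⟨by linarith, by nlinarith, by nlinarith⟩
  -- summability
  have hsumA : ∀ r : ℝ, 0 ≤ r → r ≤ 1 → Summable (fun z : ℕ => q z * r ^ z) := by
    intro r h0 h1
    exact Summable.of_nonneg_of_le (fun z => mul_nonneg (hqnn z) (pow_nonneg h0 z))
      (fun z => mul_le_of_le_one_right (hqnn z) (pow_le_one₀ h0 h1)) hqsum
  -- geometric identity
  have hgeom : ∀ (x : ℝ) (z : ℕ), (1 - (c-1)*x)^z - (1 - c*x)^z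
      = (∑ i ∈ range z, (1-(c-1)*x)^i * (1-c*x)^(z-1-i)) * x := by
    intro x z
    have h := geom_sum₂_mul (1-(c-1)*x) (1-c*x) z
    rw [show (1-(c-1)*x) - (1-c*x) = x by ring] at h
    linarith
  -- difference form
  have hfeq : ∀ x ∈ Set.Icc (0:ℝ) (1/c),
      (∑' z : ℕ, q z * (1-(c-1)*x)^z) - (∑' z : ℕ, q z * (1-c*x)^z)
      = ∑' z : ℕ, q z * ((1-(c-1)*x)^z - (1-c*x)^z) := by
    intro x hx
    obtain ⟨h1, h2, h3⟩ := hbnds x hx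
    rw [← Summable.tsum_sub (hsumA _ (le_trans h1 h2) h3) (hsumA _ h1 (le_trans h2 h3))]
    exact tsum_congr fun z => by ring
  have hsumD : ∀ x ∈ Set.Icc (0:ℝ) (1/c),
      Summable (fun z : ℕ => q z * ((1-(c-1)*x)^z - (1-c*x)^z)) := by
    intro x hx
    obtain ⟨h1, h2, h3⟩ := hbnds x hx
    exact ((hsumA _ (le_trans h1 h2) h3).sub (hsumA _ h1 (le_trans h2 h3))).congr
      (fun z => by ring)
  have hdiffnn : ∀ x ∈ Set.Icc (0:ℝ) (1/c), ∀ z : ℕ,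
      0 ≤ q z * ((1-(c-1)*x)^z - (1-c*x)^z) := by
    intro x hx z
    obtain ⟨h1, h2, h3⟩ := hbnds x hx
    exact mul_nonneg (hqnn z) (sub_nonneg.mpr (pow_le_pow_left₀ h1 h2 z))
  -- a z0 with positive mass
  have hz0 : ∃ z0, 2 ≤ z0 ∧ 0 < q z0 := by
    by_contra h
    push_neg at h
    have hzero : ∀ z, q z = 0 := by
      intro z
      rcases Nat.lt_or_ge z 2 with hz | hz
      · interval_cases z
        · exact hq0
        · exact hq1
      · exact le_antisymm (h z hz) (hqnn z)
    have : ∑' z : ℕ, q z = 0 := by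
      calc ∑' z : ℕ, q z = ∑' _ : ℕ, (0:ℝ) := tsum_congr hzero
        _ = 0 := tsum_zero
    linarith
  obtain ⟨z0, hz02, hz0pos⟩ := hz0
  -- strict "cross" monotonicity
  have hcross : ∀ x y : ℝ, x ∈ Set.Ioc (0:ℝ) (1/c) → y ∈ Set.Ioc (0:ℝ) (1/c) → x < y →
      ((∑' z : ℕ, q z * (1-(c-1)*y)^z) - (∑' z : ℕ, q z * (1-c*y)^z)) * x
      < ((∑' z : ℕ, q z * (1-(c-1)*x)^z) - (∑' z : ℕ, q z * (1-c*x)^z)) * y := by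
    intro x y hx hy hxy
    have hxI : x ∈ Set.Icc (0:ℝ) (1/c) := ⟨hx.1.le, hx.2⟩
    have hyI : y ∈ Set.Icc (0:ℝ) (1/c) := ⟨hy.1.le, hy.2⟩
    obtain ⟨hbx0, hbax, hax1⟩ := hbnds x hxI
    obtain ⟨hby0, hbay, hay1⟩ := hbnds y hyI
    have hBmono : 1 - c * y < 1 - c * x := by nlinarith
    have hAmono : 1 - (c-1) * y ≤ 1 - (c-1) * x := by nlinarith [hx.1]
    have hxy0 : 0 ≤ x * y := le_of_lt (mul_pos hx.1 hy.1)
    rw [hfeq x hxI, hfeq y hyI, ← tsum_mul_right, ← tsum_mul_right]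
    have hSle : ∀ z : ℕ, ∑ i ∈ range z, (1-(c-1)*y)^i * (1-c*y)^(z-1-i)
        ≤ ∑ i ∈ range z, (1-(c-1)*x)^i * (1-c*x)^(z-1-i) := by
      intro z
      apply Finset.sum_le_sum
      intro i _
      have h1 : (1-(c-1)*y)^i ≤ (1-(c-1)*x)^i :=
        pow_le_pow_left₀ (le_trans hby0 hbay) hAmono i
      have h2 : (1-c*y)^(z-1-i) ≤ (1-c*x)^(z-1-i) :=
        pow_le_pow_left₀ hby0 hBmono.le _
      exact mul_le_mul h1 h2 (pow_nonneg hby0 _)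
        (pow_nonneg (le_trans hbx0 hbax) _)
    have hS0 : ∀ z : ℕ, 0 ≤ ∑ i ∈ range z, (1-(c-1)*y)^i * (1-c*y)^(z-1-i) := by
      intro z
      exact Finset.sum_nonneg fun i _ =>
        mul_nonneg (pow_nonneg (le_trans hby0 hbay) _) (pow_nonneg hby0 _)
    have key : ∀ z : ℕ, q z * ((1-(c-1)*y)^z - (1-c*y)^z) * x
        ≤ q z * ((1-(c-1)*x)^z - (1-c*x)^z) * y := by
      intro z
      rw [hgeom x z, hgeom y z]
      calc q z * ((∑ i ∈ range z, (1-(c-1)*y)^i * (1-c*y)^(z-1-i)) * y) * x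
          = (q z * ∑ i ∈ range z, (1-(c-1)*y)^i * (1-c*y)^(z-1-i)) * (x * y) := by ring
        _ ≤ (q z * ∑ i ∈ range z, (1-(c-1)*x)^i * (1-c*x)^(z-1-i)) * (x * y) :=
            mul_le_mul_of_nonneg_right (mul_le_mul_of_nonneg_left (hSle z) (hqnn z)) hxy0
        _ = q z * ((∑ i ∈ range z, (1-(c-1)*x)^i * (1-c*x)^(z-1-i)) * x) * y := by ring
    have keys : q z0 * ((1-(c-1)*y)^z0 - (1-c*y)^z0) * x
        < q z0 * ((1-(c-1)*x)^z0 - (1-c*x)^z0) * y := by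
      have hSlt : ∑ i ∈ range z0, (1-(c-1)*y)^i * (1-c*y)^(z0-1-i)
          < ∑ i ∈ range z0, (1-(c-1)*x)^i * (1-c*x)^(z0-1-i) := by
        apply Finset.sum_lt_sum
        · intro i _
          have h1 : (1-(c-1)*y)^i ≤ (1-(c-1)*x)^i :=
            pow_le_pow_left₀ (le_trans hby0 hbay) hAmono i
          have h2 : (1-c*y)^(z0-1-i) ≤ (1-c*x)^(z0-1-i) :=
            pow_le_pow_left₀ hby0 hBmono.le _
          exact mul_le_mul h1 h2 (pow_nonneg hby0 _)
            (pow_nonneg (le_trans hbx0 hbax) _)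
        · refine ⟨0, Finset.mem_range.mpr (by omega), ?_⟩
          simp only [pow_zero, one_mul, Nat.sub_zero]
          exact pow_lt_pow_left₀ hBmono hby0 (by omega)
      rw [hgeom x z0, hgeom y z0]
      calc q z0 * ((∑ i ∈ range z0, (1-(c-1)*y)^i * (1-c*y)^(z0-1-i)) * y) * x
          = (q z0 * ∑ i ∈ range z0, (1-(c-1)*y)^i * (1-c*y)^(z0-1-i)) * (x * y) := by ring
        _ < (q z0 * ∑ i ∈ range z0, (1-(c-1)*x)^i * (1-c*x)^(z0-1-i)) * (x * y) :=
            mul_lt_mul_of_pos_right (mul_lt_mul_of_pos_left hSlt hz0pos)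
              (mul_pos hx.1 hy.1)
        _ = q z0 * ((∑ i ∈ range z0, (1-(c-1)*x)^i * (1-c*x)^(z0-1-i)) * x) * y := by ring
    exact Summable.tsum_lt_tsum key keys ((hsumD y hyI).mul_right x) ((hsumD x hxI).mul_right y)
  -- value at 1/c
  have honeI : (1:ℝ)/c ∈ Set.Icc (0:ℝ) (1/c) := ⟨hik0.le, le_refl _⟩
  have hBk : 1 - c * (1/c) = 0 := by field_simp; ring
  have hAk : 1 - (c-1) * (1/c) = 1/c := by field_simp; ring
  have hG0 : ∑' z : ℕ, q z * (0:ℝ)^z = 0 := by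
    rw [tsum_eq_single 0 (fun z hz => by simp [zero_pow hz])]
    simp [hq0]
  have hfk_le : (∑' z : ℕ, q z * (1-(c-1)*(1/c))^z) - (∑' z : ℕ, q z * (1-c*(1/c))^z)
      ≤ 1/c := by
    rw [hAk, hBk, hG0, sub_zero]
    have h1 : ∀ z : ℕ, q z * (1/c)^z ≤ q z * (1/c) := by
      intro z
      match z with
      | 0 => simp [hq0]
      | 1 => simp [pow_one]
      | (n+2) =>
        have : ((1:ℝ)/c)^(n+2) ≤ (1/c)^1 :=
          pow_le_pow_of_le_one hik0.le hik1 (by omega)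
        rw [pow_one] at this
        exact mul_le_mul_of_nonneg_left this (hqnn _)
    calc ∑' z : ℕ, q z * (1/c)^z ≤ ∑' z : ℕ, q z * (1/c) :=
          Summable.tsum_le_tsum h1 (hsumA _ hik0.le hik1) (hqsum.mul_right _)
      _ = 1 * (1/c) := by rw [tsum_mul_right, hq1sum]
      _ = 1/c := one_mul _
  -- choose N with partial mass > 1/2
  obtain ⟨N, hN⟩ : ∃ N, (1:ℝ)/2 < ∑ z ∈ range N, q z := by
    have h := hqsum.hasSum.tendsto_sum_nat
    rw [hq1sum] at h
    exact (h.eventually (eventually_gt_nhds (by norm_num : (1:ℝ)/2 < 1))).exists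
  -- the polynomial T
  set T : ℝ → ℝ := fun x => ∑ z ∈ range N, q z *
      ∑ i ∈ range z, (1-(c-1)*x)^i * (1-c*x)^(z-1-i) with hTdef
  have hTcont : Continuous T := by
    apply continuous_finset_sum
    intro z _
    apply Continuous.mul continuous_const
    apply continuous_finset_sum
    intro i _
    fun_prop
  have hT0 : 1 < T 0 := by
    have hT0eq : T 0 = ∑ z ∈ range N, q z * z := by
      rw [hTdef]
      apply Finset.sum_congr rfl
      intro z _
      simp
    rw [hT0eq]
    have h2 : ∀ z ∈ range N, 2 * q z ≤ q z * z := by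
      intro z _
      match z with
      | 0 => simp [hq0]
      | 1 => simp [hq1]
      | (n+2) =>
        have h := hqnn (n+2)
        have : (0:ℝ) ≤ n := Nat.cast_nonneg n
        push_cast
        nlinarith
    have h3 : 2 * ∑ z ∈ range N, q z ≤ ∑ z ∈ range N, q z * z := by
      rw [Finset.mul_sum]
      exact Finset.sum_le_sum h2
    linarith
  -- find x0 > 0 with T x0 > 1
  obtain ⟨ε, hε0, hε⟩ := Metric.eventually_nhds_iff.mp
    ((hTcont.continuousAt (x := 0)).eventually (eventually_gt_nhds hT0))
  set x0 : ℝ := min (ε/2) (1/c) with hx0def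
  have hx00 : 0 < x0 := lt_min (by linarith) hik0
  have hx0k : x0 ≤ 1/c := min_le_right _ _
  have hx0I : x0 ∈ Set.Icc (0:ℝ) (1/c) := ⟨hx00.le, hx0k⟩
  have hTx0 : 1 < T x0 := by
    apply hε
    rw [Real.dist_eq, sub_zero, abs_of_pos hx00]
    calc x0 ≤ ε/2 := min_le_left _ _
      _ < ε := by linarith
  -- f x0 > x0
  have hfx0 : x0 < (∑' z : ℕ, q z * (1-(c-1)*x0)^z) - (∑' z : ℕ, q z * (1-c*x0)^z) := by
    rw [hfeq x0 hx0I]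
    have hpart : ∑ z ∈ range N, q z * ((1-(c-1)*x0)^z - (1-c*x0)^z)
        ≤ ∑' z : ℕ, q z * ((1-(c-1)*x0)^z - (1-c*x0)^z) :=
      Summable.sum_le_tsum (range N) (fun z _ => hdiffnn x0 hx0I z) (hsumD x0 hx0I)
    have heq : ∑ z ∈ range N, q z * ((1-(c-1)*x0)^z - (1-c*x0)^z) = T x0 * x0 := by
      rw [hTdef, Finset.sum_mul]
      apply Finset.sum_congr rfl
      intro z _
      rw [hgeom x0 z]
      ring
    have : x0 < T x0 * x0 := by nlinarith
    linarith
  -- continuity on [0, 1/c]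
  have hcont : ContinuousOn (fun x : ℝ =>
      (∑' z : ℕ, q z * (1-(c-1)*x)^z) - (∑' z : ℕ, q z * (1-c*x)^z) - x)
      (Set.Icc (0:ℝ) (1/c)) := by
    apply ContinuousOn.sub _ continuousOn_id
    apply ContinuousOn.sub
    · apply continuousOn_tsum (u := q)
      · intro z; fun_prop
      · exact hqsum
      · intro z x hx
        obtain ⟨h1, h2, h3⟩ := hbnds x hx
        rw [Real.norm_eq_abs,
          abs_of_nonneg (mul_nonneg (hqnn z) (pow_nonneg (le_trans h1 h2) z))]
        exact mul_le_of_le_one_right (hqnn z) (pow_le_one₀ (le_trans h1 h2) h3)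
    · apply continuousOn_tsum (u := q)
      · intro z; fun_prop
      · exact hqsum
      · intro z x hx
        obtain ⟨h1, h2, h3⟩ := hbnds x hx
        rw [Real.norm_eq_abs, abs_of_nonneg (mul_nonneg (hqnn z) (pow_nonneg h1 z))]
        exact mul_le_of_le_one_right (hqnn z) (pow_le_one₀ h1 (le_trans h2 h3))
  -- IVT
  have hgle : (∑' z : ℕ, q z * (1-(c-1)*(1/c))^z) - (∑' z : ℕ, q z * (1-c*(1/c))^z)
      - (1/c) ≤ 0 := by linarith
  have hgge : 0 ≤ (∑' z : ℕ, q z * (1-(c-1)*x0)^z) - (∑' z : ℕ, q z * (1-c*x0)^z) - x0 := by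
    linarith
  obtain ⟨r, hrI, hgr⟩ :=
    intermediate_value_Icc' hx0k
      (hcont.mono (Set.Icc_subset_Icc hx00.le le_rfl))
      (Set.mem_Icc.mpr ⟨hgle, hgge⟩)
  have hrfix : (∑' z : ℕ, q z * (1-(c-1)*r)^z) - (∑' z : ℕ, q z * (1-c*r)^z) = r := by
    have : (∑' z : ℕ, q z * (1-(c-1)*r)^z) - (∑' z : ℕ, q z * (1-c*r)^z) - r = 0 := hgr
    linarith
  have hrIoc : r ∈ Set.Ioc (0:ℝ) (1/c) := ⟨lt_of_lt_of_le hx00 hrI.1, hrI.2⟩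
  refine ⟨r, ⟨hrIoc, hrfix⟩, ?_⟩
  rintro y ⟨hyIoc, hyfix⟩
  by_contra hne
  rcases lt_or_gt_of_ne hne with h | h
  · have := hcross y r hyIoc hrIoc h
    rw [hyfix, hrfix, mul_comm y r] at this
    exact lt_irrefl _ this
  · have := hcross r y hrIoc hyIoc h
    rw [hyfix, hrfix, mul_comm y r] at this
    exact lt_irrefl _ this
end

section
/- For integers z ≥ 2 and k ≥ 1, the function f_{z,k}(x) = (1-(k-1)x)^z - (1-kx)^z has exactly one fixed point in the interval (0, 1/k]. -/
open Finset

/-- `f_{z,k}(x) = (1-(k-1)x)^z - (1-kx)^z` has exactly one fixed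
point in `(0, 1/k]`. -/
theorem stmt_4 (z k : ℕ) (hz : 2 ≤ z) (hk : 1 ≤ k) :
    ∃! x : ℝ, x ∈ Set.Ioc (0 : ℝ) (1 / k) ∧
      (1 - ((k : ℝ) - 1) * x) ^ z - (1 - (k : ℝ) * x) ^ z = x := by
  have hk1 : (1:ℝ) ≤ k := by exact_mod_cast hk
  have hk0 : (0:ℝ) < k := by linarith
  set a : ℝ → ℝ := fun x => 1 - ((k:ℝ) - 1) * x with ha
  set b : ℝ → ℝ := fun x => 1 - (k:ℝ) * x with hb
  set h : ℝ → ℝ := fun x => ∑ i ∈ range z, a x ^ i * b x ^ (z - 1 - i) with hh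
  have key : ∀ x : ℝ, a x ^ z - b x ^ z = h x * x := by
    intro x
    have h1 := geom_sum₂_mul (a x) (b x) z
    have hab : a x - b x = x := by simp only [ha, hb]; ring
    rw [hab] at h1
    exact h1.symm
  have hbnn : ∀ x ∈ Set.Icc (0:ℝ) (1/k), 0 ≤ b x := by
    intro x hx
    have h2 : x * k ≤ (1/k) * k := by
      exact mul_le_mul_of_nonneg_right hx.2 (le_of_lt hk0)
    have : (1/(k:ℝ)) * k = 1 := by field_simp
    simp only [hb]; nlinarith
  have hab' : ∀ x ∈ Set.Icc (0:ℝ) (1/k), b x ≤ a x := by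
    intro x hx
    simp only [ha, hb]
    nlinarith [hx.1]
  have hanti : StrictAntiOn h (Set.Icc (0:ℝ) (1/k)) := by
    intro x hx y hy hxy
    have hby : 0 ≤ b y := hbnn y hy
    have hbb : b y ≤ b x := by simp only [hb]; nlinarith
    have hay : 0 ≤ a y := le_trans hby (hab' y hy)
    have haa : a y ≤ a x := by simp only [ha]; nlinarith
    apply Finset.sum_lt_sum
    · intro i hi
      exact mul_le_mul (pow_le_pow_left₀ hay haa i) (pow_le_pow_left₀ hby hbb _)
        (pow_nonneg hby _) (pow_nonneg (le_trans hay haa) i)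
    · refine ⟨0, Finset.mem_range.2 (by omega), ?_⟩
      simp only [pow_zero, one_mul, Nat.sub_zero]
      have hblt : b y < b x := by simp only [hb]; nlinarith
      exact pow_lt_pow_left₀ hblt hby (by omega)
  have h0 : h 0 = z := by
    simp [hh, ha, hb]
  have hk_inv_mem : (1/(k:ℝ)) ∈ Set.Icc (0:ℝ) (1/k) := by
    exact ⟨by positivity, le_rfl⟩
  have hbk : b (1/k) = 0 := by
    simp only [hb]; field_simp; ring
  have hak : a (1/k) = 1/k := by
    simp only [ha]; field_simp; ring
  have hK : h (1/(k:ℝ)) ≤ 1 := by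
    have hsum : h (1/(k:ℝ)) = a (1/k) ^ (z-1) * b (1/k) ^ (z - 1 - (z-1)) := by
      rw [hh]
      apply Finset.sum_eq_single
      · intro i hi hne
        have hiz : i < z := Finset.mem_range.1 hi
        have : 0 < z - 1 - i := by omega
        rw [hbk, zero_pow (by omega), mul_zero]
      · intro hnot
        exact absurd (Finset.mem_range.2 (by omega)) hnot
    rw [hsum, hak, Nat.sub_self, pow_zero, mul_one]
    apply pow_le_one₀ (by positivity)
    rw [div_le_one hk0]; exact hk1
  have hcont : ContinuousOn h (Set.Icc (0:ℝ) (1/k)) := by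
    apply Continuous.continuousOn
    apply continuous_finset_sum
    intro i _
    fun_prop
  have hz1 : (1:ℝ) ≤ h 0 := by rw [h0]; exact_mod_cast (by omega : 1 ≤ z)
  have hmem : (1:ℝ) ∈ Set.Icc (h (1/(k:ℝ))) (h 0) := ⟨hK, hz1⟩
  obtain ⟨x, hx, hx1⟩ := intermediate_value_Icc' (by positivity) hcont hmem
  have hxne : x ≠ 0 := by
    intro hx0
    rw [hx0, h0] at hx1
    have : (2:ℝ) ≤ z := by exact_mod_cast hz
    linarith
  have hxmem : x ∈ Set.Ioc (0:ℝ) (1/k) := ⟨lt_of_le_of_ne hx.1 (Ne.symm hxne), hx.2⟩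
  refine ⟨x, ⟨hxmem, ?_⟩, ?_⟩
  · have := key x
    simp only [ha, hb] at this
    rw [this, hx1, one_mul]
  · rintro y ⟨hymem, hyfix⟩
    have hyIcc : y ∈ Set.Icc (0:ℝ) (1/k) := ⟨le_of_lt hymem.1, hymem.2⟩
    have hky := key y
    simp only [ha, hb] at hky
    rw [hky] at hyfix
    have hy1 : h y = 1 := by
      have h1y : h y * y = 1 * y := by rw [one_mul]; exact hyfix
      exact mul_right_cancel₀ (ne_of_gt hymem.1) h1y
    exact hanti.injOn hyIcc hx (hy1.trans hx1.symm)
end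

section
/- For integers z ≥ 2 and k ≥ 2, the unique fixed point x̄ of f_{z,k}(x) = (1-(k-1)x)^z - (1-kx)^z in (0,1/k] satisfies x̃_{z,k} < x̄ < x̃_{z,k-1}, where x̃_{z,m} = (1/m)(1 - (1/z)^{1/(z-1)}). -/
/-- the unique fixed point `x̄` of `f_{z,k}` in `(0,1/k]`
satisfies `x̃_{z,k} < x̄ < x̃_{z,k-1}` where
`x̃_{z,m} = (1 - z^{-1/(z-1)})/m`. -/
theorem stmt_5 (z k : ℕ) (hz : 2 ≤ z) (hk : 2 ≤ k) (xbar : ℝ)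
    (hmem : xbar ∈ Set.Ioc (0 : ℝ) (1 / k))
    (hfix : (1 - ((k : ℝ) - 1) * xbar) ^ z - (1 - (k : ℝ) * xbar) ^ z = xbar) :
    (1 - (z : ℝ) ^ (-(1 : ℝ) / ((z : ℝ) - 1))) / k < xbar ∧
      xbar < (1 - (z : ℝ) ^ (-(1 : ℝ) / ((z : ℝ) - 1))) / ((k : ℝ) - 1) := by
  obtain ⟨hx0, hx1⟩ := hmem
  have hk0 : (0:ℝ) < k := by
    have : (2:ℝ) ≤ k := by exact_mod_cast hk
    linarith
  have hk1 : (1:ℝ) < k := by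
    have : (2:ℝ) ≤ k := by exact_mod_cast hk
    linarith
  have hz2 : (2:ℝ) ≤ z := by exact_mod_cast hz
  set a : ℝ := 1 - (k:ℝ) * xbar with ha_def
  set b : ℝ := 1 - ((k:ℝ) - 1) * xbar with hb_def
  have hab : a < b := by simp only [ha_def, hb_def]; nlinarith
  have ha0 : 0 ≤ a := by
    have h1 : xbar ≤ 1 / k := hx1
    rw [le_div_iff₀ hk0] at h1
    simp only [ha_def]
    nlinarith
  have hb0 : 0 ≤ b := le_trans ha0 hab.le
  have hba : b - a = xbar := by simp only [ha_def, hb_def]; ring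
  have hsum : (∑ i ∈ Finset.range z, b ^ i * a ^ (z - 1 - i)) = 1 := by
    have h := geom_sum₂_mul b a z
    rw [hba, hfix] at h
    have := mul_right_cancel₀ (ne_of_gt hx0) (h.trans (one_mul xbar).symm)
    exact this
  have hzm : z - 1 ≠ 0 := by omega
  -- upper bound on sum
  have hupper : (1:ℝ) < z * b ^ (z - 1) := by
    have h1 : (∑ i ∈ Finset.range z, b ^ i * a ^ (z - 1 - i)) <
        ∑ _i ∈ Finset.range z, b ^ (z - 1) := by
      apply Finset.sum_lt_sum
      · intro i hi
        have hle : a ^ (z - 1 - i) ≤ b ^ (z - 1 - i) := pow_le_pow_left₀ ha0 hab.le _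
        calc b ^ i * a ^ (z - 1 - i) ≤ b ^ i * b ^ (z - 1 - i) :=
              mul_le_mul_of_nonneg_left hle (pow_nonneg hb0 i)
          _ = b ^ (z - 1) := by
              rw [← pow_add]
              congr 1
              have : i < z := Finset.mem_range.mp hi
              omega
      · refine ⟨0, Finset.mem_range.mpr (by omega), ?_⟩
        simpa using pow_lt_pow_left₀ hab ha0 hzm
    rw [hsum] at h1
    simpa [Finset.sum_const, Finset.card_range, nsmul_eq_mul] using h1
  -- lower bound on sum
  have hlower : (z:ℝ) * a ^ (z - 1) < 1 := by
    have h1 : (∑ _i ∈ Finset.range z, a ^ (z - 1)) <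
        ∑ i ∈ Finset.range z, b ^ i * a ^ (z - 1 - i) := by
      apply Finset.sum_lt_sum
      · intro i hi
        have hle : a ^ i ≤ b ^ i := pow_le_pow_left₀ ha0 hab.le _
        calc a ^ (z - 1) = a ^ i * a ^ (z - 1 - i) := by
              rw [← pow_add]
              congr 1
              have : i < z := Finset.mem_range.mp hi
              omega
          _ ≤ b ^ i * a ^ (z - 1 - i) :=
              mul_le_mul_of_nonneg_right hle (pow_nonneg ha0 _)
      · refine ⟨z - 1, Finset.mem_range.mpr (by omega), ?_⟩
        have : z - 1 - (z - 1) = 0 := by omega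
        rw [this, pow_zero, mul_one]
        exact pow_lt_pow_left₀ hab ha0 hzm
    rw [hsum] at h1
    calc (z:ℝ) * a ^ (z - 1) = ∑ _i ∈ Finset.range z, a ^ (z - 1) := by
          simp [Finset.sum_const, Finset.card_range, nsmul_eq_mul]
      _ < 1 := h1
  -- the constant c
  set c : ℝ := (z:ℝ) ^ (-(1 : ℝ) / ((z : ℝ) - 1)) with hc_def
  have hzpos : (0:ℝ) < z := by linarith
  have hc0 : 0 < c := Real.rpow_pos_of_pos hzpos _
  have hcz : c ^ (z - 1) = ((z:ℝ))⁻¹ := by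
    have hcast : ((z - 1 : ℕ) : ℝ) = (z:ℝ) - 1 := by
      have : 1 ≤ z := by omega
      push_cast [this]
      ring
    rw [hc_def, ← Real.rpow_natCast ((z:ℝ) ^ (-(1 : ℝ) / ((z : ℝ) - 1))) (z-1),
      ← Real.rpow_mul hzpos.le, hcast]
    have hne : (z:ℝ) - 1 ≠ 0 := by linarith
    rw [show (-(1 : ℝ) / ((z : ℝ) - 1)) * ((z:ℝ) - 1) = -1 by field_simp]
    simpa using Real.rpow_neg_one (z:ℝ)
  have hac : a < c := by
    have h : a ^ (z - 1) < c ^ (z - 1) := by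
      rw [hcz, inv_eq_one_div, lt_div_iff₀ hzpos]
      nlinarith [hlower]
    exact lt_of_pow_lt_pow_left₀ _ hc0.le h
  have hcb : c < b := by
    have h : c ^ (z - 1) < b ^ (z - 1) := by
      rw [hcz, inv_eq_one_div, div_lt_iff₀ hzpos]
      nlinarith [hupper]
    exact lt_of_pow_lt_pow_left₀ _ hb0 h
  constructor
  · rw [div_lt_iff₀ hk0]
    have : a < c := hac
    rw [ha_def] at this
    nlinarith
  · rw [lt_div_iff₀ (by linarith : (0:ℝ) < (k:ℝ) - 1)]
    have : c < b := hcb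
    rw [hb_def] at this
    nlinarith
end

section
/- For integers z ≥ 2 and k ≥ 1, with x̃_{z,k} = (1/k)(1 - (1/z)^{1/(z-1)}), one has f_{z,k}(x̃_{z,k}) > x̃_{z,k}, i.e. (1 - ((k-1)/k)(1 - z^{-1/(z-1)}))^z - (z^{-1/(z-1)})^z > (1 - z^{-1/(z-1)})/k. -/
/-- `f_{z,k}(x̃_{z,k}) > x̃_{z,k}` where
`x̃_{z,k} = (1 - z^{-1/(z-1)})/k`. -/
theorem stmt_6 (z k : ℕ) (hz : 2 ≤ z) (hk : 1 ≤ k) :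
    (1 - (((k : ℝ) - 1) / k) * (1 - (z : ℝ) ^ (-(1 : ℝ) / ((z : ℝ) - 1)))) ^ z
        - ((z : ℝ) ^ (-(1 : ℝ) / ((z : ℝ) - 1))) ^ z
      > (1 - (z : ℝ) ^ (-(1 : ℝ) / ((z : ℝ) - 1))) / k := by
  have hz1 : (1 : ℝ) < z := by exact_mod_cast lt_of_lt_of_le one_lt_two (by exact_mod_cast hz)
  have hz0 : (0 : ℝ) < z := lt_trans one_pos hz1
  have hzm : (0 : ℝ) < (z : ℝ) - 1 := by linarith
  have hk0 : (0 : ℝ) < k := by exact_mod_cast hk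
  set t : ℝ := (z : ℝ) ^ (-(1 : ℝ) / ((z : ℝ) - 1)) with ht
  have ht0 : 0 < t := Real.rpow_pos_of_pos hz0 _
  have ht1 : t < 1 := by
    apply Real.rpow_lt_one_of_one_lt_of_neg hz1
    exact div_neg_of_neg_of_pos (by norm_num) hzm
  set a : ℝ := (1 - t) / k with ha
  have ha0 : 0 < a := div_pos (by linarith) hk0
  -- key: t ^ z = t / z
  have htz : t ^ z = t / z := by
    have h1 : t ^ (z - 1) = (z : ℝ)⁻¹ := by
      rw [ht, ← Real.rpow_natCast ((z : ℝ) ^ (-(1 : ℝ) / ((z : ℝ) - 1))) (z - 1),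
        ← Real.rpow_mul (le_of_lt hz0)]
      have : ((z - 1 : ℕ) : ℝ) = (z : ℝ) - 1 := by
        push_cast [Nat.cast_sub (le_trans one_le_two hz)]; ring
      rw [this, div_mul_cancel₀ _ (ne_of_gt hzm), Real.rpow_neg_one]
    have h2 : z = (z - 1) + 1 := by omega
    calc t ^ z = t ^ (z - 1) * t := by conv_lhs => rw [h2, pow_succ]
    _ = t / z := by rw [h1]; field_simp
  -- rewrite base
  have hbase : 1 - (((k : ℝ) - 1) / k) * (1 - t) = t + a := by
    rw [ha]; field_simp; ring
  rw [hbase, htz]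
  -- Bernoulli: (1 + a/t)^z > 1 + z * (a/t)
  have hB : 1 + (z : ℝ) * (a / t) < (1 + a / t) ^ (z : ℝ) := by
    have hs : -1 ≤ a / t := le_trans (by norm_num) (le_of_lt (div_pos ha0 ht0))
    exact one_add_mul_self_lt_rpow_one_add hs (ne_of_gt (div_pos ha0 ht0)) hz1
  have hpow : (1 + a / t) ^ (z : ℝ) = (1 + a / t) ^ z := Real.rpow_natCast _ _
  rw [hpow] at hB
  have hta : (t + a) ^ z = t ^ z * (1 + a / t) ^ z := by
    rw [← mul_pow]; congr 1; field_simp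
  have hkey : t ^ z * (1 + (z : ℝ) * (a / t)) < (t + a) ^ z := by
    rw [hta]
    exact mul_lt_mul_of_pos_left hB (pow_pos ht0 z)
  have hexp : t ^ z * (1 + (z : ℝ) * (a / t)) = t / z + a := by
    rw [htz]; field_simp
  rw [hexp] at hkey
  linarith
end

section
/- For integers z ≥ 2 and k ≥ 2, with x̃_{z,k-1} = (1/(k-1))(1 - (1/z)^{1/(z-1)}), one has f_{z,k}(x̃_{z,k-1}) < x̃_{z,k-1}. -/
/-- `f_{z,k}(x̃_{z,k-1}) < x̃_{z,k-1}` where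
`x̃_{z,k-1} = (1 - z^{-1/(z-1)})/(k-1)`. -/
theorem stmt_7 (z k : ℕ) (hz : 2 ≤ z) (hk : 2 ≤ k) :
    (1 - ((k : ℝ) - 1) * ((1 - (z : ℝ) ^ (-(1 : ℝ) / ((z : ℝ) - 1))) / ((k : ℝ) - 1))) ^ z
        - (1 - (k : ℝ) * ((1 - (z : ℝ) ^ (-(1 : ℝ) / ((z : ℝ) - 1))) / ((k : ℝ) - 1))) ^ z
      < (1 - (z : ℝ) ^ (-(1 : ℝ) / ((z : ℝ) - 1))) / ((k : ℝ) - 1) := by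
  have hz1 : (1:ℝ) < (z:ℝ) := by exact_mod_cast lt_of_lt_of_le one_lt_two hz
  have hc : (0:ℝ) < (z:ℝ) - 1 := by linarith
  set c : ℝ := (z:ℝ) - 1 with hcdef
  set t : ℝ := (z:ℝ) ^ (-(1:ℝ)/c) with htdef
  have htpos : 0 < t := Real.rpow_pos_of_pos (by linarith) _
  have htlt : t < 1 := Real.rpow_lt_one_of_one_lt_of_neg hz1 (by
    apply div_neg_of_neg_of_pos <;> [norm_num; exact hc])
  have hk1 : (1:ℝ) ≤ (k:ℝ) - 1 := by
    have : (2:ℝ) ≤ (k:ℝ) := by exact_mod_cast hk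
    linarith
  have hk0 : ((k:ℝ) - 1) ≠ 0 := by linarith
  set x : ℝ := (1 - t)/((k:ℝ)-1) with hxdef
  have hx : 0 < x := div_pos (by linarith) (by linarith)
  have hxle : x ≤ 1 - t := by
    rw [hxdef, div_le_iff₀ (by linarith)]
    nlinarith
  -- t ≥ 1/2
  have hcz : ((z - 1 : ℕ) : ℝ) = c := by
    rw [hcdef]; push_cast [Nat.cast_sub (by omega : 1 ≤ z)]; ring
  have hhalf : (1:ℝ)/2 ≤ t := by
    have hn : z ≤ 2 ^ (z-1) := by
      have := Nat.lt_two_pow_self (n := z-1)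
      omega
    have h1 : (z:ℝ) ≤ (2:ℝ) ^ c := by
      rw [← hcz, Real.rpow_natCast]
      exact_mod_cast hn
    have h2 : ((2:ℝ) ^ c) ^ (-(1:ℝ)/c) ≤ t := by
      rw [htdef]
      exact Real.rpow_le_rpow_of_nonpos (by linarith) h1
        (le_of_lt (div_neg_of_neg_of_pos (by norm_num) hc))
    have h3 : ((2:ℝ) ^ c) ^ (-(1:ℝ)/c) = (1:ℝ)/2 := by
      rw [← Real.rpow_mul (by norm_num)]
      have : c * (-1/c) = -1 := by field_simp
      rw [this, Real.rpow_neg_one]; norm_num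
    linarith
  have hb : 0 ≤ t - x := by linarith
  -- t^(z-1) = 1/z
  have htp : t ^ (z-1) = 1/(z:ℝ) := by
    rw [htdef, ← Real.rpow_natCast _ (z-1), ← Real.rpow_mul (by linarith), hcz,
      div_mul_cancel₀]
    · rw [Real.rpow_neg_one]; exact (one_div _).symm
    · linarith
  -- simplify goal
  have e1 : 1 - ((k:ℝ) - 1) * x = t := by
    rw [hxdef, mul_div_cancel₀ _ hk0]; ring
  have e2 : 1 - (k:ℝ) * x = t - x := by
    have : (k:ℝ) * x = ((k:ℝ)-1) * x + x := by ring
    rw [this]; rw [hxdef, mul_div_cancel₀ _ hk0]; ring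
  rw [e1, e2]
  -- key: t^z - (t-x)^z < z * t^(z-1) * x = x
  have key : t ^ z - (t - x) ^ z < (z:ℝ) * t ^ (z-1) * x := by
    have hs : -1 ≤ -x/t := by
      rw [neg_div, neg_le_neg_iff, div_le_one htpos]; linarith
    have hs' : -x/t ≠ 0 := by
      simp only [neg_div, ne_eq, neg_eq_zero, div_eq_zero_iff]
      push_neg; exact ⟨hx.ne', htpos.ne'⟩
    have hber := one_add_mul_self_lt_rpow_one_add hs hs' (show (1:ℝ) < (z:ℝ) from hz1)
    have h1 : (1:ℝ) + (-x/t) = (t - x)/t := by field_simp; ring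
    rw [h1] at hber
    have h2 : ((t - x)/t) ^ ((z:ℕ):ℝ) = (t-x)^z / t^z := by
      rw [Real.rpow_natCast, div_pow]
    rw [h2] at hber
    have htz : (0:ℝ) < t ^ z := pow_pos htpos z
    rw [lt_div_iff₀ htz] at hber
    have h3 : t ^ z = t * t ^ (z-1) := by
      rw [← pow_succ']; congr 1; omega
    have h4 : (1 + (z:ℝ) * (-x/t)) * t ^ z = t ^ z - (z:ℝ) * x * t ^ (z-1) := by
      rw [h3]; field_simp; ring
    rw [h4] at hber; linarith
  calc t ^ z - (t - x) ^ z < (z:ℝ) * t ^ (z-1) * x := key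
    _ = x := by rw [htp]; field_simp
end

section
/- For integers z ≥ 2 and k ≥ 1, the derivative f'_{z,k}(x) = kz(1-kx)^{z-1} - (k-1)z(1-(k-1)x)^{z-1} has exactly one zero in (0,1/k], namely x̂_{z,k} = (k^{1/(z-1)} - (k-1)^{1/(z-1)}) / (k^{z/(z-1)} - (k-1)^{z/(z-1)}), and f_{z,k} is increasing on [0, x̂_{z,k}] and decreasing on [x̂_{z,k}, 1/k]. -/
open Real Set

set_option maxHeartbeats 1000000

lemma aux8 (z : ℕ) (hz : 2 ≤ z) (a b : ℝ) (hb : 0 ≤ b) (hba : b < a) :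
    (∀ x ∈ Set.Ioc (0:ℝ) (1/a),
      (a * z * (1 - a*x)^(z-1) - b * z * (1 - b*x)^(z-1) = 0 ↔
        x = (a ^ ((1:ℝ)/((z:ℝ)-1)) - b ^ ((1:ℝ)/((z:ℝ)-1)))
            / (a ^ ((z:ℝ)/((z:ℝ)-1)) - b ^ ((z:ℝ)/((z:ℝ)-1))))) ∧
    MonotoneOn (fun x : ℝ => (1 - b*x)^z - (1 - a*x)^z)
      (Set.Icc 0 ((a ^ ((1:ℝ)/((z:ℝ)-1)) - b ^ ((1:ℝ)/((z:ℝ)-1)))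
            / (a ^ ((z:ℝ)/((z:ℝ)-1)) - b ^ ((z:ℝ)/((z:ℝ)-1))))) ∧
    AntitoneOn (fun x : ℝ => (1 - b*x)^z - (1 - a*x)^z)
      (Set.Icc ((a ^ ((1:ℝ)/((z:ℝ)-1)) - b ^ ((1:ℝ)/((z:ℝ)-1)))
            / (a ^ ((z:ℝ)/((z:ℝ)-1)) - b ^ ((z:ℝ)/((z:ℝ)-1)))) (1/a)) := by
  have ha : 0 < a := lt_of_le_of_lt hb hba
  have hz2 : (2:ℝ) ≤ (z:ℝ) := by exact_mod_cast hz
  have hzpos : 0 < (z:ℝ) - 1 := by linarith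
  set e : ℝ := (1:ℝ)/((z:ℝ)-1) with he_def
  set p : ℝ := (z:ℝ)/((z:ℝ)-1) with hp_def
  have he : 0 < e := by positivity
  have hp : 0 < p := by positivity
  set A : ℝ := a ^ e with hA_def
  set B : ℝ := b ^ e with hB_def
  set D : ℝ := a ^ p - b ^ p with hD_def
  have hn : ((z - 1 : ℕ) : ℝ) = (z:ℝ) - 1 := by
    have : (1:ℕ) ≤ z := by omega
    push_cast [Nat.cast_sub this]; ring
  have hA : A ^ (z-1) = a := by
    rw [hA_def, ← Real.rpow_natCast _ (z-1), hn, ← Real.rpow_mul ha.le]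
    rw [he_def, one_div, inv_mul_cancel₀ (ne_of_gt hzpos), Real.rpow_one]
  have hB : B ^ (z-1) = b := by
    rw [hB_def, ← Real.rpow_natCast _ (z-1), hn, ← Real.rpow_mul hb]
    rw [he_def, one_div, inv_mul_cancel₀ (ne_of_gt hzpos), Real.rpow_one]
  have hep : e + 1 = p := by
    rw [he_def, hp_def, div_add_one (ne_of_gt hzpos)]; congr 1; ring
  have hAa : A * a = a ^ p := by
    rw [hA_def, ← hep, Real.rpow_add ha, Real.rpow_one]
  have hBb : B * b = b ^ p := by
    rcases eq_or_lt_of_le hb with h0 | h0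
    · rw [hB_def, ← h0, Real.zero_rpow (ne_of_gt he), Real.zero_rpow (ne_of_gt hp), zero_mul]
    · rw [hB_def, ← hep, Real.rpow_add h0, Real.rpow_one]
  have hDpos : 0 < D := sub_pos.2 (Real.rpow_lt_rpow hb hba hp)
  have hABlt : B < A := Real.rpow_lt_rpow hb hba he
  have hA0 : 0 ≤ A := Real.rpow_nonneg ha.le e
  have hB0 : 0 ≤ B := Real.rpow_nonneg hb e
  set X : ℝ := (A - B) / D with hX_def
  have hX0 : 0 < X := div_pos (sub_pos.2 hABlt) hDpos
  have hD' : D = A * a - B * b := by rw [hAa, hBb]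
  have hg : ∀ x : ℝ, A * (1 - a*x) - B * (1 - b*x) = (A - B) - D * x := by
    intro x; linear_combination x * hD'
  have hXle : X ≤ 1/a := by
    have h1 : (A - B) - D * (1/a) ≤ 0 := by
      rw [← hg]
      have : a * (1/a) = 1 := mul_one_div_cancel (ne_of_gt ha)
      rw [this]
      have hba' : b * (1/a) ≤ 1 := by
        rw [mul_one_div, div_le_one ha]; exact hba.le
      nlinarith
    rw [hX_def, div_le_div_iff₀ hDpos ha]
    nlinarith
  -- derivative
  have hkey : ∀ x : ℝ, a * (1 - a*x)^(z-1) - b * (1 - b*x)^(z-1)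
      = (A * (1 - a*x))^(z-1) - (B * (1 - b*x))^(z-1) := by
    intro x; rw [mul_pow, mul_pow, hA, hB]
  have hc : ∀ (c : ℝ) (x : ℝ), HasDerivAt (fun x : ℝ => (1 - c*x)^z)
      ((z:ℝ) * (1 - c*x)^(z-1) * (-c)) x := by
    intro c x
    have h1 : HasDerivAt (fun x : ℝ => 1 - c*x) (-c) x := by
      simpa using ((hasDerivAt_id x).const_mul c).const_sub 1
    exact (h1.pow z).congr_deriv (by ring)
  have hf : ∀ x : ℝ, HasDerivAt (fun x : ℝ => (1 - b*x)^z - (1 - a*x)^z)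
      ((z:ℝ) * (a * (1 - a*x)^(z-1) - b * (1 - b*x)^(z-1))) x := by
    intro x
    have := (hc b x).sub (hc a x)
    exact this.congr_deriv (by ring)
  have hderiv : ∀ x : ℝ, deriv (fun x : ℝ => (1 - b*x)^z - (1 - a*x)^z) x
      = (z:ℝ) * ((A * (1 - a*x))^(z-1) - (B * (1 - b*x))^(z-1)) := by
    intro x; rw [(hf x).deriv, hkey]
  have hzR : (0:ℝ) < (z:ℝ) := by linarith
  have hcont : Continuous (fun x : ℝ => (1 - b*x)^z - (1 - a*x)^z) := by
    fun_prop
  refine ⟨?_, ?_, ?_⟩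
  · intro x hx
    obtain ⟨hx0, hx1⟩ := hx
    have hu : 0 ≤ 1 - a*x := by
      have : a * x ≤ 1 := by
        rw [← mul_one_div_cancel (ne_of_gt ha)]
        exact mul_le_mul_of_nonneg_left hx1 ha.le
      linarith
    have hv : 0 ≤ 1 - b*x := by nlinarith
    constructor
    · intro h
      have h2 : (A * (1 - a*x))^(z-1) = (B * (1 - b*x))^(z-1) := by
        have h3 : (z:ℝ) * ((A * (1 - a*x))^(z-1) - (B * (1 - b*x))^(z-1)) = 0 := by
          rw [← hkey]; linear_combination h
        have := mul_eq_zero.1 h3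
        rcases this with h4 | h4
        · exact absurd h4 (ne_of_gt hzR)
        · linarith
      have h5 : A * (1 - a*x) = B * (1 - b*x) := by
        have hnz : z - 1 ≠ 0 := by omega
        exact (pow_left_strictMonoOn₀ (M₀ := ℝ) hnz).injOn
          (mul_nonneg hA0 hu) (mul_nonneg hB0 hv) h2
      have h6 : (A - B) - D * x = 0 := by rw [← hg, h5]; ring
      rw [hX_def] at *
      field_simp
      linarith
    · intro h
      rw [h]
      have h6 : A * (1 - a*X) - B * (1 - b*X) = 0 := by
        rw [hg, hX_def, mul_div_cancel₀ _ (ne_of_gt hDpos)]; ring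
      have h5 : A * (1 - a*X) = B * (1 - b*X) := by linarith
      have : a * (1 - a*X)^(z-1) - b * (1 - b*X)^(z-1) = 0 := by
        rw [hkey, h5]; ring
      linear_combination (z:ℝ) * this
  · apply monotoneOn_of_deriv_nonneg (convex_Icc _ _) hcont.continuousOn
    · intro x _
      exact (hf x).differentiableAt.differentiableWithinAt
    · intro x hx
      rw [interior_Icc] at hx
      obtain ⟨hx0, hx1⟩ := hx
      rw [hderiv]
      have hxa : x < 1/a := lt_of_lt_of_le hx1 hXle
      have hu : 0 ≤ 1 - a*x := by
        have : a * x < 1 := by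
          have := mul_lt_mul_of_pos_left hxa ha
          rwa [mul_one_div_cancel (ne_of_gt ha)] at this
        linarith
      have hv : 0 ≤ 1 - b*x := by nlinarith
      have hgx : B * (1 - b*x) ≤ A * (1 - a*x) := by
        have : 0 ≤ (A - B) - D * x := by
          have : D * x ≤ D * X := mul_le_mul_of_nonneg_left hx1.le hDpos.le
          rw [hX_def, mul_div_cancel₀ _ (ne_of_gt hDpos)] at this
          linarith
        rw [← hg] at this; linarith
      have := pow_le_pow_left₀ (mul_nonneg hB0 hv) hgx (z-1)
      nlinarith
  · apply antitoneOn_of_deriv_nonpos (convex_Icc _ _) hcont.continuousOn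
    · intro x _
      exact (hf x).differentiableAt.differentiableWithinAt
    · intro x hx
      rw [interior_Icc] at hx
      obtain ⟨hx0, hx1⟩ := hx
      rw [hderiv]
      have hu : 0 ≤ 1 - a*x := by
        have : a * x < 1 := by
          have := mul_lt_mul_of_pos_left hx1 ha
          rwa [mul_one_div_cancel (ne_of_gt ha)] at this
        linarith
      have hxpos : 0 < x := lt_trans hX0 hx0
      have hv : 0 ≤ 1 - b*x := by nlinarith
      have hgx : A * (1 - a*x) ≤ B * (1 - b*x) := by
        have : (A - B) - D * x ≤ 0 := by
          have : D * X ≤ D * x := mul_le_mul_of_nonneg_left hx0.le hDpos.le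
          rw [hX_def, mul_div_cancel₀ _ (ne_of_gt hDpos)] at this
          linarith
        rw [← hg] at this; linarith
      have := pow_le_pow_left₀ (mul_nonneg hA0 hu) hgx (z-1)
      nlinarith

/-- the derivative
`f'_{z,k}(x) = kz(1-kx)^{z-1} - (k-1)z(1-(k-1)x)^{z-1}` has exactly one zero in
`(0,1/k]`, namely `x̂_{z,k}`, and `f_{z,k}` is increasing before it and
decreasing after it. -/
theorem stmt_8 (z k : ℕ) (hz : 2 ≤ z) (hk : 1 ≤ k) :
    (∀ x ∈ Set.Ioc (0 : ℝ) (1 / k),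
        ((k : ℝ) * z * (1 - (k : ℝ) * x) ^ (z - 1)
            - ((k : ℝ) - 1) * z * (1 - ((k : ℝ) - 1) * x) ^ (z - 1) = 0
          ↔ x = ((k : ℝ) ^ ((1 : ℝ) / ((z : ℝ) - 1))
                  - ((k : ℝ) - 1) ^ ((1 : ℝ) / ((z : ℝ) - 1)))
              / ((k : ℝ) ^ ((z : ℝ) / ((z : ℝ) - 1))
                  - ((k : ℝ) - 1) ^ ((z : ℝ) / ((z : ℝ) - 1))))) ∧
      MonotoneOn (fun x : ℝ => (1 - ((k : ℝ) - 1) * x) ^ z - (1 - (k : ℝ) * x) ^ z)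
        (Set.Icc 0 (((k : ℝ) ^ ((1 : ℝ) / ((z : ℝ) - 1))
            - ((k : ℝ) - 1) ^ ((1 : ℝ) / ((z : ℝ) - 1)))
          / ((k : ℝ) ^ ((z : ℝ) / ((z : ℝ) - 1))
            - ((k : ℝ) - 1) ^ ((z : ℝ) / ((z : ℝ) - 1))))) ∧
      AntitoneOn (fun x : ℝ => (1 - ((k : ℝ) - 1) * x) ^ z - (1 - (k : ℝ) * x) ^ z)
        (Set.Icc (((k : ℝ) ^ ((1 : ℝ) / ((z : ℝ) - 1))
            - ((k : ℝ) - 1) ^ ((1 : ℝ) / ((z : ℝ) - 1)))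
          / ((k : ℝ) ^ ((z : ℝ) / ((z : ℝ) - 1))
            - ((k : ℝ) - 1) ^ ((z : ℝ) / ((z : ℝ) - 1)))) (1 / k)) := by
  have hk1 : (1 : ℝ) ≤ (k : ℝ) := by exact_mod_cast hk
  exact aux8 z hz (k : ℝ) ((k : ℝ) - 1) (by linarith) (by linarith)
end

section
/- For integers z ≥ 3 and k ≥ 2, the unique zero x* of the second derivative of f_{z,k}(x) = (1-(k-1)x)^z - (1-kx)^z in (0,1/k] is x*_{z,k} = (k^{2/(z-2)} - (k-1)^{2/(z-2)}) / (k^{z/(z-2)} - (k-1)^{z/(z-2)}), and x̂_{z,k} < x*_{z,k}, where x̂_{z,k} = (k^{1/(z-1)} - (k-1)^{1/(z-1)}) / (k^{z/(z-1)} - (k-1)^{z/(z-1)}). -/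
private lemma pow_inj' {u v : ℝ} (hu : 0 ≤ u) (hv : 0 ≤ v) {n : ℕ} (hn : n ≠ 0)
    (h : u ^ n = v ^ n) : u = v := by
  rcases lt_trichotomy u v with h1 | h1 | h1
  · exact absurd h (ne_of_lt (pow_lt_pow_left₀ h1 hu hn))
  · exact h1
  · exact absurd h.symm (ne_of_lt (pow_lt_pow_left₀ h1 hv hn))

set_option maxHeartbeats 1000000 in
/-- the second derivative
`f''_{z,k}(x) = z(z-1)(k-1)²(1-(k-1)x)^{z-2} - z(z-1)k²(1-kx)^{z-2}`
has a unique zero `x*_{z,k}` in `(0,1/k]`, and `x̂_{z,k} < x*_{z,k}`. -/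
theorem stmt_9 (z k : ℕ) (hz : 3 ≤ z) (hk : 2 ≤ k) :
    (∀ x ∈ Set.Ioc (0 : ℝ) (1 / k),
        ((z : ℝ) * ((z : ℝ) - 1) * ((k : ℝ) - 1) ^ 2 * (1 - ((k : ℝ) - 1) * x) ^ (z - 2)
            - (z : ℝ) * ((z : ℝ) - 1) * (k : ℝ) ^ 2 * (1 - (k : ℝ) * x) ^ (z - 2) = 0
          ↔ x = ((k : ℝ) ^ ((2 : ℝ) / ((z : ℝ) - 2))
                  - ((k : ℝ) - 1) ^ ((2 : ℝ) / ((z : ℝ) - 2)))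
              / ((k : ℝ) ^ ((z : ℝ) / ((z : ℝ) - 2))
                  - ((k : ℝ) - 1) ^ ((z : ℝ) / ((z : ℝ) - 2))))) ∧
      ((k : ℝ) ^ ((1 : ℝ) / ((z : ℝ) - 1)) - ((k : ℝ) - 1) ^ ((1 : ℝ) / ((z : ℝ) - 1)))
          / ((k : ℝ) ^ ((z : ℝ) / ((z : ℝ) - 1)) - ((k : ℝ) - 1) ^ ((z : ℝ) / ((z : ℝ) - 1)))
        < ((k : ℝ) ^ ((2 : ℝ) / ((z : ℝ) - 2)) - ((k : ℝ) - 1) ^ ((2 : ℝ) / ((z : ℝ) - 2)))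
          / ((k : ℝ) ^ ((z : ℝ) / ((z : ℝ) - 2)) - ((k : ℝ) - 1) ^ ((z : ℝ) / ((z : ℝ) - 2))) := by
  have hzR : (3 : ℝ) ≤ (z : ℝ) := by exact_mod_cast hz
  have hkR : (2 : ℝ) ≤ (k : ℝ) := by exact_mod_cast hk
  set a : ℝ := (k : ℝ) - 1 with hadef
  set b : ℝ := (k : ℝ) with hbdef
  have ha0 : (0 : ℝ) < a := by simp only [hadef]; linarith
  have hb0 : (0 : ℝ) < b := by simp only [hbdef]; linarith
  have hab : a < b := by simp only [hadef, hbdef]; linarith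
  have hz2 : (0 : ℝ) < (z : ℝ) - 2 := by linarith
  have hz1 : (0 : ℝ) < (z : ℝ) - 1 := by linarith
  set q : ℝ := 2 / ((z : ℝ) - 2) with hqdef
  set p : ℝ := 1 / ((z : ℝ) - 1) with hpdef
  have hq0 : 0 < q := by rw [hqdef]; positivity
  have hp0 : 0 < p := by rw [hpdef]; positivity
  have hzq : (z : ℝ) / ((z : ℝ) - 2) = 1 + q := by
    rw [hqdef]; field_simp; ring
  have hzp : (z : ℝ) / ((z : ℝ) - 1) = 1 + p := by
    rw [hpdef]; field_simp; ring
  have hBq : b ^ ((z : ℝ) / ((z : ℝ) - 2)) = b * b ^ q := by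
    rw [hzq, Real.rpow_add hb0, Real.rpow_one]
  have hAq : a ^ ((z : ℝ) / ((z : ℝ) - 2)) = a * a ^ q := by
    rw [hzq, Real.rpow_add ha0, Real.rpow_one]
  have hBp : b ^ ((z : ℝ) / ((z : ℝ) - 1)) = b * b ^ p := by
    rw [hzp, Real.rpow_add hb0, Real.rpow_one]
  have hAp : a ^ ((z : ℝ) / ((z : ℝ) - 1)) = a * a ^ p := by
    rw [hzp, Real.rpow_add ha0, Real.rpow_one]
  have hABq : a ^ q < b ^ q := Real.rpow_lt_rpow ha0.le hab hq0
  have hABp : a ^ p < b ^ p := Real.rpow_lt_rpow ha0.le hab hp0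
  have haq0 : 0 < a ^ q := Real.rpow_pos_of_pos ha0 q
  have hbq0 : 0 < b ^ q := Real.rpow_pos_of_pos hb0 q
  have hap0 : 0 < a ^ p := Real.rpow_pos_of_pos ha0 p
  have hbp0 : 0 < b ^ p := Real.rpow_pos_of_pos hb0 p
  have hDq : 0 < b * b ^ q - a * a ^ q := by nlinarith
  have hDp : 0 < b * b ^ p - a * a ^ p := by nlinarith
  have hn0 : z - 2 ≠ 0 := by omega
  have hnc : ((z - 2 : ℕ) : ℝ) = (z : ℝ) - 2 := by
    rw [Nat.cast_sub (by omega : 2 ≤ z)]; norm_num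
  have hAn : (a ^ q) ^ (z - 2) = a ^ 2 := by
    rw [← Real.rpow_natCast (a ^ q) (z - 2), ← Real.rpow_mul ha0.le, hnc, hqdef,
      div_mul_cancel₀ 2 hz2.ne']
    rw [show (2 : ℝ) = ((2 : ℕ) : ℝ) by norm_num, Real.rpow_natCast]
  have hBn : (b ^ q) ^ (z - 2) = b ^ 2 := by
    rw [← Real.rpow_natCast (b ^ q) (z - 2), ← Real.rpow_mul hb0.le, hnc, hqdef,
      div_mul_cancel₀ 2 hz2.ne']
    rw [show (2 : ℝ) = ((2 : ℕ) : ℝ) by norm_num, Real.rpow_natCast]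
  have hzz : (0 : ℝ) < (z : ℝ) * ((z : ℝ) - 1) := by nlinarith
  constructor
  · intro x hx
    obtain ⟨hx0, hx1⟩ := hx
    have hbx : b * x ≤ 1 := by
      rw [le_div_iff₀ hb0] at hx1; linarith [hx1]
    have h1b : 0 ≤ 1 - b * x := by linarith
    have h1a : 0 ≤ 1 - a * x := by
      have := mul_le_mul_of_nonneg_right hab.le hx0.le
      linarith
    rw [hBq, hAq]
    constructor
    · intro heq
      have h2 : a ^ 2 * (1 - a * x) ^ (z - 2) = b ^ 2 * (1 - b * x) ^ (z - 2) := by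
        have hsplit : (z : ℝ) * ((z : ℝ) - 1) *
            (a ^ 2 * (1 - a * x) ^ (z - 2) - b ^ 2 * (1 - b * x) ^ (z - 2)) = 0 := by
          linear_combination heq
        rcases mul_eq_zero.1 hsplit with h | h
        · exact absurd h hzz.ne'
        · linarith [sub_eq_zero.1 h]
      have h3 : (a ^ q * (1 - a * x)) ^ (z - 2) = (b ^ q * (1 - b * x)) ^ (z - 2) := by
        rw [mul_pow, mul_pow, hAn, hBn]; exact h2
      have h4 : a ^ q * (1 - a * x) = b ^ q * (1 - b * x) :=
        pow_inj' (mul_nonneg haq0.le h1a) (mul_nonneg hbq0.le h1b) hn0 h3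
      rw [eq_div_iff hDq.ne']
      linear_combination h4
    · intro hxe
      have h4 : a ^ q * (1 - a * x) = b ^ q * (1 - b * x) := by
        rw [hxe]
        linear_combination (b ^ q - a ^ q) * (mul_inv_cancel₀ hDq.ne')
      have h2 : a ^ 2 * (1 - a * x) ^ (z - 2) = b ^ 2 * (1 - b * x) ^ (z - 2) := by
        rw [← hAn, ← hBn, ← mul_pow, ← mul_pow, h4]
      linear_combination ((z : ℝ) * ((z : ℝ) - 1)) * h2
  · have hpq : p < q := by
      rw [hpdef, hqdef, div_lt_div_iff₀ hz1 hz2]; linarith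
    have hr : a ^ (q - p) < b ^ (q - p) := Real.rpow_lt_rpow ha0.le hab (by linarith)
    have hsa : a ^ q = a ^ p * a ^ (q - p) := by
      rw [← Real.rpow_add ha0]; congr 1; ring
    have hsb : b ^ q = b ^ p * b ^ (q - p) := by
      rw [← Real.rpow_add hb0]; congr 1; ring
    have hkey : 0 < a ^ p * b ^ q - a ^ q * b ^ p := by
      rw [hsa, hsb]
      have h := mul_pos (mul_pos hap0 hbp0) (sub_pos.2 hr)
      nlinarith [h]
    rw [hBq, hAq, hBp, hAp, div_lt_div_iff₀ hDp hDq]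
    nlinarith [mul_pos (sub_pos.2 hab) hkey]
end

section
/- For integers z ≥ 2 and k ≥ 2, the derivative of f_{z,k} at its unique fixed point x̄ in (0,1/k] satisfies f'_{z,k}(x̄) < 1. That is, kz(1-k x̄)^{z-1} - (k-1)z(1-(k-1)x̄)^{z-1} < 1. -/
/-- at the unique fixed point `x̄` of `f_{z,k}` in `(0,1/k]`,
`f'_{z,k}(x̄) = kz(1-kx̄)^{z-1} - (k-1)z(1-(k-1)x̄)^{z-1} < 1`. -/
theorem stmt_10 (z k : ℕ) (hz : 2 ≤ z) (hk : 2 ≤ k) (xbar : ℝ)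
    (hmem : xbar ∈ Set.Ioc (0 : ℝ) (1 / k))
    (hfix : (1 - ((k : ℝ) - 1) * xbar) ^ z - (1 - (k : ℝ) * xbar) ^ z = xbar) :
    (k : ℝ) * z * (1 - (k : ℝ) * xbar) ^ (z - 1)
      - ((k : ℝ) - 1) * z * (1 - ((k : ℝ) - 1) * xbar) ^ (z - 1) < 1 := by
  obtain ⟨hx0, hx1⟩ := hmem
  have hk0 : (0 : ℝ) < k := by positivity
  set a : ℝ := 1 - ((k : ℝ) - 1) * xbar with ha
  set b : ℝ := 1 - (k : ℝ) * xbar with hb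
  have hb0 : 0 ≤ b := by
    have h1 : xbar * k ≤ 1 := (le_div_iff₀ hk0).mp hx1
    have : (k : ℝ) * xbar ≤ 1 := by nlinarith
    simp [hb]; linarith
  have hab : b < a := by simp [ha, hb]; nlinarith
  have ha0 : 0 < a := lt_of_le_of_lt hb0 hab
  have hz1 : 1 ≤ z - 1 := by omega
  have hzn : z - 1 ≠ 0 := by omega
  have hk1 : (1 : ℝ) ≤ (k : ℝ) - 1 := by
    have : (2 : ℝ) ≤ (k : ℝ) := by exact_mod_cast hk
    linarith
  have hzR : (1 : ℝ) ≤ (z : ℝ) := by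
    have : (2 : ℝ) ≤ (z : ℝ) := by exact_mod_cast hz
    linarith
  -- geometric sum equals 1
  have hS : ∑ i ∈ Finset.range z, a ^ i * b ^ (z - 1 - i) = 1 := by
    have hgs := geom_sum₂_mul a b z
    rw [hfix] at hgs
    have hx : a - b = xbar := by simp [ha, hb]; ring
    rw [hx] at hgs
    exact mul_right_cancel₀ (ne_of_gt hx0) (by rw [hgs, one_mul])
  have key : (z : ℝ) * b ^ (z - 1) < 1 := by
    rcases eq_or_lt_of_le hb0 with hbz | hbz
    · rw [← hbz, zero_pow hzn, mul_zero]; norm_num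
    · rw [← hS]
      have hsum : ∀ i ∈ Finset.range z, b ^ (z - 1) ≤ a ^ i * b ^ (z - 1 - i) := by
        intro i hi
        have hi' : i ≤ z - 1 := by
          simp only [Finset.mem_range] at hi; omega
        calc b ^ (z - 1) = b ^ i * b ^ (z - 1 - i) := by
              rw [← pow_add, Nat.add_sub_cancel' hi']
          _ ≤ a ^ i * b ^ (z - 1 - i) := by
              apply mul_le_mul_of_nonneg_right (pow_le_pow_left₀ hb0 hab.le i)
              positivity
      have hstrict : b ^ (z - 1) < a ^ (z - 1) * b ^ (z - 1 - (z - 1)) := by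
        rw [Nat.sub_self, pow_zero, mul_one]
        exact pow_lt_pow_left₀ hab hb0 hzn
      have hlt := Finset.sum_lt_sum hsum ⟨z - 1, Finset.mem_range.mpr (by omega), hstrict⟩
      calc (z : ℝ) * b ^ (z - 1)
          = ∑ _i ∈ Finset.range z, b ^ (z - 1) := by
            rw [Finset.sum_const, Finset.card_range, nsmul_eq_mul]
        _ < _ := hlt
  have hmono : ((k : ℝ) - 1) * z * b ^ (z - 1) ≤ ((k : ℝ) - 1) * z * a ^ (z - 1) := by
    apply mul_le_mul_of_nonneg_left (pow_le_pow_left₀ hb0 hab.le _)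
    nlinarith
  nlinarith [key, hmono]
end

section
/- For z = 3 and every integer k ≥ 2, the minimum of the derivative of f_{3,k}(x) = (1-(k-1)x)^3 - (1-kx)^3 over [0, 1/k] equals -3k(k-1)/(3k^2-3k+1), which is strictly greater than -1. -/
/-- for `z = 3`, the minimum over `[0,1/k]` of the derivative
`f'_{3,k}(x) = 3k(1-kx)² - 3(k-1)(1-(k-1)x)²` is `-3k(k-1)/(3k²-3k+1) > -1`. -/
theorem stmt_11 (k : ℕ) (hk : 2 ≤ k) :
    IsLeast ((fun x : ℝ => 3 * (k : ℝ) * (1 - (k : ℝ) * x) ^ 2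
          - 3 * ((k : ℝ) - 1) * (1 - ((k : ℝ) - 1) * x) ^ 2) ''
        Set.Icc (0 : ℝ) (1 / k))
      (-(3 * (k : ℝ) * ((k : ℝ) - 1)) / (3 * (k : ℝ) ^ 2 - 3 * (k : ℝ) + 1)) ∧
    (-1 : ℝ) < -(3 * (k : ℝ) * ((k : ℝ) - 1)) / (3 * (k : ℝ) ^ 2 - 3 * (k : ℝ) + 1) := by
  have hk2 : (2 : ℝ) ≤ (k : ℝ) := by exact_mod_cast hk
  have hkpos : (0 : ℝ) < (k : ℝ) := by linarith
  have hD : (0 : ℝ) < 3 * (k : ℝ) ^ 2 - 3 * (k : ℝ) + 1 := by nlinarith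
  have hDne : (3 * (k : ℝ) ^ 2 - 3 * (k : ℝ) + 1) ≠ 0 := ne_of_gt hD
  refine ⟨⟨⟨(2 * (k : ℝ) - 1) / (3 * (k : ℝ) ^ 2 - 3 * (k : ℝ) + 1), ?_, ?_⟩, ?_⟩, ?_⟩
  · constructor
    · apply div_nonneg (by linarith) (le_of_lt hD)
    · rw [div_le_div_iff₀ hD hkpos]
      nlinarith [sq_nonneg ((k : ℝ) - 1)]
  · dsimp only
    have hD' : 3 * (k : ℝ) * ((k : ℝ) - 1) + 1 ≠ 0 := by ring_nf; ring_nf at hDne; exact hDne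
    field_simp
    ring
  · rintro y ⟨x, hx, rfl⟩
    dsimp only
    rw [div_le_iff₀ hD]
    nlinarith [sq_nonneg (x * (3 * (k : ℝ) ^ 2 - 3 * (k : ℝ) + 1) - (2 * (k : ℝ) - 1)), hD]
  · rw [neg_div, neg_lt_neg_iff, div_lt_one hD]
    nlinarith
end

section
/- For z = 4 and every integer k ≥ 2, the minimum of the derivative of f_{4,k}(x) = (1-(k-1)x)^4 - (1-kx)^4 over [0,1/k] equals -4k(k-1)/(2k-1)^2, which is strictly greater than -1. -/
/-- for `z = 4`, the minimum over `[0,1/k]` of the derivative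
`f'_{4,k}(x) = 4k(1-kx)³ - 4(k-1)(1-(k-1)x)³` is `-4k(k-1)/(2k-1)² > -1`. -/
theorem stmt_12 (k : ℕ) (hk : 2 ≤ k) :
    IsLeast ((fun x : ℝ => 4 * (k : ℝ) * (1 - (k : ℝ) * x) ^ 3
          - 4 * ((k : ℝ) - 1) * (1 - ((k : ℝ) - 1) * x) ^ 3) ''
        Set.Icc (0 : ℝ) (1 / k))
      (-(4 * (k : ℝ) * ((k : ℝ) - 1)) / (2 * (k : ℝ) - 1) ^ 2) ∧
    (-1 : ℝ) < -(4 * (k : ℝ) * ((k : ℝ) - 1)) / (2 * (k : ℝ) - 1) ^ 2 := by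
  have hK : (2 : ℝ) ≤ (k : ℝ) := by exact_mod_cast hk
  have hKpos : (0 : ℝ) < (k : ℝ) := by linarith
  have h2K : (0 : ℝ) < 2 * (k : ℝ) - 1 := by linarith
  have hsq : (0 : ℝ) < (2 * (k : ℝ) - 1) ^ 2 := by positivity
  set K : ℝ := (k : ℝ)
  constructor
  · constructor
    · -- membership: attained at x = 1/(2K-1)
      refine ⟨1 / (2 * K - 1), ⟨by positivity, ?_⟩, ?_⟩
      · rw [div_le_div_iff₀ h2K hKpos]; linarith
      · have h2K' : K * 2 - 1 ≠ 0 := by linarith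
        field_simp
        ring
    · -- lower bound
      rintro y ⟨x, ⟨hx0, hx1⟩, rfl⟩
      simp only
      rw [div_le_iff₀ hsq]
      have hx1' : K * x ≤ 1 := by
        rw [le_div_iff₀ hKpos] at hx1; linarith [hx1]
      have h1 : (0 : ℝ) ≤ ((2 * K - 1) * x - 1) ^ 2 := sq_nonneg _
      have h2 : (0 : ℝ) ≤ (5 * K ^ 2 - 5 * K + 1) - (2 * K - 1) * (2 * K ^ 2 - 2 * K + 1) * x := by
        have hx1'' : (2 * K - 1) * (2 * K ^ 2 - 2 * K + 1) * x ≤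
            (2 * K - 1) * (2 * K ^ 2 - 2 * K + 1) * (1 / K) := by
          have : (0 : ℝ) < (2 * K - 1) * (2 * K ^ 2 - 2 * K + 1) := by nlinarith
          exact mul_le_mul_of_nonneg_left hx1 this.le
        have key : (2 * K - 1) * (2 * K ^ 2 - 2 * K + 1) * (1 / K) ≤ 5 * K ^ 2 - 5 * K + 1 := by
          rw [mul_one_div, div_le_iff₀ hKpos]
          nlinarith
        linarith
      nlinarith [mul_nonneg h1 h2]
  · rw [neg_div, neg_lt_neg_iff, div_lt_one hsq]
    nlinarith
end

section
/- The limit as k → ∞ of f'_{z,k}(x̃_{z,k}), where f_{z,k}(x) = (1-(k-1)x)^z - (1-kx)^z and x̃_{z,k} = (1 - z^{-1/(z-1)})/k, equals L(z) = 1 - (z-1) z^{1/(z-1)} (1 - z^{-1/(z-1)}). Moreover L(z) ∈ (-1,1) for integer z with 2 ≤ z ≤ 5, and L(z) < -1 for integer z ≥ 6. -/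
open Filter Real

/-- as `k → ∞` (real), `f'_{z,k}(x̃_{z,k})` tends to
`L(z) = 1 - (z-1) z^{1/(z-1)} (1 - z^{-1/(z-1)})`; moreover `L(z) ∈ (-1,1)` for
`2 ≤ z ≤ 5` and `L(z) < -1` for `z ≥ 6`. -/
theorem stmt_13 (z : ℕ) (hz : 2 ≤ z) :
    Filter.Tendsto
      (fun k : ℝ =>
        k * z * (1 - k * ((1 - (z : ℝ) ^ (-(1 : ℝ) / ((z : ℝ) - 1))) / k)) ^ (z - 1)
          - (k - 1) * z *
            (1 - (k - 1) * ((1 - (z : ℝ) ^ (-(1 : ℝ) / ((z : ℝ) - 1))) / k)) ^ (z - 1))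
      Filter.atTop
      (nhds (1 - ((z : ℝ) - 1) * (z : ℝ) ^ ((1 : ℝ) / ((z : ℝ) - 1))
        * (1 - (z : ℝ) ^ (-(1 : ℝ) / ((z : ℝ) - 1))))) ∧
    (z ≤ 5 →
      (1 - ((z : ℝ) - 1) * (z : ℝ) ^ ((1 : ℝ) / ((z : ℝ) - 1))
          * (1 - (z : ℝ) ^ (-(1 : ℝ) / ((z : ℝ) - 1)))) ∈ Set.Ioo (-1 : ℝ) 1) ∧
    (6 ≤ z →
      1 - ((z : ℝ) - 1) * (z : ℝ) ^ ((1 : ℝ) / ((z : ℝ) - 1))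
          * (1 - (z : ℝ) ^ (-(1 : ℝ) / ((z : ℝ) - 1))) < -1) := by
  have hz0 : (0:ℝ) < (z:ℝ) := by positivity
  have hz1 : (1:ℝ) < (z:ℝ) := by exact_mod_cast Nat.lt_of_lt_of_le one_lt_two hz
  obtain ⟨n, hnz⟩ : ∃ n, z = n + 1 := ⟨z - 1, by omega⟩
  have hn1 : 1 ≤ n := by omega
  have hzn : z - 1 = n := by omega
  have hnR : (0:ℝ) < (n:ℝ) := by exact_mod_cast hn1
  have hcast : ((z:ℝ) - 1) = (n:ℝ) := by subst hnz; push_cast; ring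
  set w : ℝ := (z:ℝ) ^ ((1:ℝ)/((z:ℝ)-1)) with hw
  have hwpos : (0:ℝ) < w := Real.rpow_pos_of_pos hz0 _
  have hwn : w ^ n = (z:ℝ) := by
    rw [hw, ← Real.rpow_natCast ((z:ℝ) ^ ((1:ℝ)/((z:ℝ)-1))) n, ← Real.rpow_mul hz0.le]
    rw [hcast]
    rw [one_div, inv_mul_cancel₀ hnR.ne', Real.rpow_one]
  have hinv : (z:ℝ) ^ (-(1:ℝ)/((z:ℝ)-1)) = w⁻¹ := by
    rw [hw, ← Real.rpow_neg hz0.le, neg_div]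
  have hw1 : 1 < w := by
    have h : (1:ℝ) < w ^ n := by rw [hwn]; exact hz1
    exact (one_lt_pow_iff_of_nonneg hwpos.le (by omega)).mp h
  rw [hinv, hzn, hcast]
  have hLsimp : (1:ℝ) - (n:ℝ) * w * (1 - w⁻¹) = 1 - n * (w - 1) := by
    field_simp
  rw [hLsimp]
  refine ⟨?_, ?_, ?_⟩
  · -- the limit
    have hp : HasDerivAt (fun t : ℝ => (1 - t) * (1 + (w-1)*t)^n) ((n:ℝ)*(w-1) - 1) 0 := by
      have h1 : HasDerivAt (fun t : ℝ => 1 - t) (-1) 0 := by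
        simpa using (hasDerivAt_id (0:ℝ)).const_sub 1
      have h2 : HasDerivAt (fun t : ℝ => 1 + (w-1)*t) (w-1) 0 := by
        simpa using ((hasDerivAt_id (0:ℝ)).const_mul (w-1)).const_add 1
      have h4 := h1.mul (h2.pow n)
      refine h4.congr_deriv ?_
      simp only [Pi.pow_apply, mul_zero, add_zero, one_pow, sub_zero]
      ring
    have hslope := hasDerivAt_iff_tendsto_slope.mp hp
    have hinvk : Tendsto (fun k : ℝ => k⁻¹) atTop (nhdsWithin (0:ℝ) {(0:ℝ)}ᶜ) := by
      refine tendsto_nhdsWithin_iff.mpr ⟨tendsto_inv_atTop_zero, ?_⟩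
      filter_upwards [eventually_gt_atTop (0:ℝ)] with k hk
      simp [(inv_pos.mpr hk).ne']
    have hcomp := (hslope.comp hinvk).neg
    have hval : -((n:ℝ)*(w-1) - 1) = 1 - n * (w-1) := by ring
    rw [hval] at hcomp
    refine hcomp.congr' ?_
    filter_upwards [eventually_ge_atTop (1:ℝ)] with k hk
    have hk0 : k ≠ 0 := by intro h; rw [h] at hk; norm_num at hk
    have e1 : 1 - k*((1-w⁻¹)/k) = w⁻¹ := by field_simp; ring
    have e2 : 1 - (k-1)*((1-w⁻¹)/k) = w⁻¹*(1+(w-1)*k⁻¹) := by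
      field_simp
      ring
    have e3 : (w⁻¹:ℝ)^n = ((z:ℝ))⁻¹ := by rw [inv_pow, hwn]
    simp only [Function.comp, slope_def_field]
    rw [e1, e2, mul_pow, e3]
    field_simp
    ring
  · -- z ≤ 5
    intro hz5
    have hn4 : n ≤ 4 := by omega
    have hkey : w < ((n:ℝ)+2)/n := by
      refine lt_of_pow_lt_pow_left₀ n (by positivity) ?_
      rw [hwn]
      have hzv : (z:ℝ) = (n:ℝ)+1 := by subst hnz; push_cast; ring
      rw [hzv]
      interval_cases n <;> norm_num
    have h2 : (n:ℝ)*(w-1) < 2 := by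
      have h3 := (lt_div_iff₀ hnR).mp hkey
      nlinarith
    have h4 : (0:ℝ) < (n:ℝ)*(w-1) := by nlinarith
    constructor
    · linarith
    · linarith
  · -- 6 ≤ z
    intro hz6
    have hn5 : 5 ≤ n := by omega
    have hzv : (z:ℝ) = (n:ℝ)+1 := by subst hnz; push_cast; ring
    have hkey : ((n:ℝ)+2)/n < w := by
      refine lt_of_pow_lt_pow_left₀ n hwpos.le ?_
      rw [hwn, hzv]
      rcases Nat.lt_or_ge n 7 with h7 | h7
      · interval_cases n <;> norm_num
      · -- n ≥ 7 : (1+2/n)^n ≤ exp 2 < 7.4 ≤ n+1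
        have hb : ((n:ℝ)+2)/n = 2/(n:ℝ) + 1 := by field_simp; ring
        have h1 : ((n:ℝ)+2)/n ≤ Real.exp (2/(n:ℝ)) := by
          rw [hb]; exact Real.add_one_le_exp _
        have h2 : (((n:ℝ)+2)/n)^n ≤ (Real.exp (2/(n:ℝ)))^n :=
          pow_le_pow_left₀ (by positivity) h1 n
        have h3 : (Real.exp (2/(n:ℝ)))^n = Real.exp 2 := by
          rw [← Real.exp_nat_mul]
          congr 1
          field_simp
        have h4 : Real.exp 2 < 7.4 := by
          have := Real.exp_one_lt_d9
          have h5 : Real.exp 2 = Real.exp 1 * Real.exp 1 := by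
            rw [← Real.exp_add]; norm_num
          nlinarith [Real.exp_pos 1]
        have h6 : (7.4:ℝ) ≤ (n:ℝ)+1 := by
          have : (7:ℝ) ≤ (n:ℝ) := by exact_mod_cast h7
          linarith
        calc (((n:ℝ)+2)/n)^n ≤ Real.exp 2 := by rw [← h3]; exact h2
          _ < 7.4 := h4
          _ ≤ (n:ℝ)+1 := h6
    have h2 : (2:ℝ) < (n:ℝ)*(w-1) := by
      have h3 := (div_lt_iff₀ hnR).mp hkey
      nlinarith
    linarith
end

section
/- For z = 6 and every integer k ≥ 2, the derivative of f_{6,k}(x) = (1-(k-1)x)^6 - (1-kx)^6 at its unique fixed point x̄ in (0,1/k] satisfies f'_{6,k}(x̄) < -1 (the fixed point is repelling). -/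
-- monotonicity helper
lemma stmt15_Smono (a b M l : ℝ) (hl0 : 0 ≤ l) (hM0 : 0 ≤ M) (haM : M ≤ a) (hbl : l ≤ b) :
    M^5+M^4*l+M^3*l^2+M^2*l^3+M*l^4+l^5 ≤ a^5+a^4*b+a^3*b^2+a^2*b^3+a*b^4+b^5 := by
  have ha0 : 0 ≤ a := hM0.trans haM
  have hb0 : 0 ≤ b := hl0.trans hbl
  gcongr

lemma stmt15_interval (a b l u M : ℝ) (hl0 : 0 ≤ l) (hM0 : 0 ≤ M)
    (hbl : l ≤ b) (hbu : b ≤ u)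
    (hS : a^5+a^4*b+a^3*b^2+a^2*b^3+a*b^4+b^5 = 1)
    (hSMl : 1 < M^5+M^4*l+M^3*l^2+M^2*l^3+M*l^4+l^5)
    (hfin : 7*M + 6*u^5 < 6)
    (hb0 : 0 ≤ b) :
    7*a + 6*b^5 < 6 := by
  have hM : a < M := by
    by_contra h
    push_neg at h
    have h1 := stmt15_Smono a b M l hl0 hM0 h hbl
    rw [hS] at h1
    linarith
  have hbu5 : b^5 ≤ u^5 := pow_le_pow_left₀ hb0 hbu 5
  linarith

lemma stmt15_mid (a b : ℝ) (hb : (0.58:ℝ) ≤ b) (hb2 : b ≤ (0.7:ℝ)) (hb0 : 0 ≤ b)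
    (hS : a^5+a^4*b+a^3*b^2+a^2*b^3+a*b^4+b^5 = 1) :
    7*a + 6*b^5 < 6 := by
  rcases le_or_gt b 0.5873 with h0 | h0
  · exact stmt15_interval a b 0.58 0.5873 0.7967 (by norm_num) (by norm_num) (by linarith) h0 hS (by norm_num) (by norm_num) hb0
  rcases le_or_gt b 0.5967 with h1 | h1
  · exact stmt15_interval a b 0.5873 0.5967 0.7917 (by norm_num) (by norm_num) (by linarith) h1 hS (by norm_num) (by norm_num) hb0
  rcases le_or_gt b 0.6081 with h2 | h2
  · exact stmt15_interval a b 0.5967 0.6081 0.7853 (by norm_num) (by norm_num) (by linarith) h2 hS (by norm_num) (by norm_num) hb0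
  rcases le_or_gt b 0.6214 with h3 | h3
  · exact stmt15_interval a b 0.6081 0.6214 0.7771 (by norm_num) (by norm_num) (by linarith) h3 hS (by norm_num) (by norm_num) hb0
  rcases le_or_gt b 0.6362 with h4 | h4
  · exact stmt15_interval a b 0.6214 0.6362 0.7673 (by norm_num) (by norm_num) (by linarith) h4 hS (by norm_num) (by norm_num) hb0
  rcases le_or_gt b 0.6517 with h5 | h5
  · exact stmt15_interval a b 0.6362 0.6517 0.7558 (by norm_num) (by norm_num) (by linarith) h5 hS (by norm_num) (by norm_num) hb0
  rcases le_or_gt b 0.6674 with h6 | h6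
  · exact stmt15_interval a b 0.6517 0.6674 0.7431 (by norm_num) (by norm_num) (by linarith) h6 hS (by norm_num) (by norm_num) hb0
  rcases le_or_gt b 0.6827 with h7 | h7
  · exact stmt15_interval a b 0.6674 0.6827 0.7295 (by norm_num) (by norm_num) (by linarith) h7 hS (by norm_num) (by norm_num) hb0
  rcases le_or_gt b 0.6971 with h8 | h8
  · exact stmt15_interval a b 0.6827 0.6971 0.7155 (by norm_num) (by norm_num) (by linarith) h8 hS (by norm_num) (by norm_num) hb0
  exact stmt15_interval a b 0.6971 0.7 0.7015 (by norm_num) (by norm_num) (by linarith) (by linarith) hS (by norm_num) (by norm_num) hb0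

lemma stmt15_key (a b : ℝ) (hb0 : 0 ≤ b) (hab : b < a) (h2a : 2*a ≤ 1 + b)
    (hS : a^5+a^4*b+a^3*b^2+a^2*b^3+a*b^4+b^5 = 1) :
    7 < 6*(a^4+a^3*b+a^2*b^2+a*b^3+b^4) := by
  have ha : 0 < a := lt_of_le_of_lt hb0 hab
  have hT : a * (a^4+a^3*b+a^2*b^2+a*b^3+b^4) = 1 - b^5 := by linear_combination hS
  have hkey : 7*a + 6*b^5 < 6 := by
    rcases le_or_gt b 0.58 with hc | hc
    · have hb4 : b^4 ≤ (0.58:ℝ)^4 := pow_le_pow_left₀ hb0 hc 4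
      have hb5 : b^5 ≤ (0.58:ℝ)^4 * b := by nlinarith
      nlinarith
    rcases le_or_gt b 0.7 with hc2 | hc2
    · exact stmt15_mid a b hc.le hc2 hb0 hS
    · exfalso
      have h1 : b ≤ a := hab.le
      have h2 : b^2 ≤ a^2 := by nlinarith
      have h3 : b^3 ≤ a^3 := by nlinarith
      have h4 : b^4 ≤ a^4 := by nlinarith
      have h5 : b^5 < a^5 := pow_lt_pow_left₀ hab hb0 (by norm_num)
      have hb5 : (0.7:ℝ)^5 ≤ b^5 := pow_le_pow_left₀ (by norm_num) hc2.le 5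
      nlinarith [mul_le_mul_of_nonneg_right h4 hb0,
        mul_le_mul_of_nonneg_right h3 (by positivity : (0:ℝ) ≤ b^2),
        mul_le_mul_of_nonneg_right h2 (by positivity : (0:ℝ) ≤ b^3),
        mul_le_mul_of_nonneg_right h1 (by positivity : (0:ℝ) ≤ b^4)]
  nlinarith [mul_pos ha ha]

/-- for `z = 6` and `k ≥ 2`, at the unique fixed point `x̄` of
`f_{6,k}` in `(0,1/k]`, `f'_{6,k}(x̄) = 6k(1-kx̄)⁵ - 6(k-1)(1-(k-1)x̄)⁵ < -1`. -/
theorem stmt_15 (k : ℕ) (hk : 2 ≤ k) (xbar : ℝ)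
    (hmem : xbar ∈ Set.Ioc (0 : ℝ) (1 / k))
    (hfix : (1 - ((k : ℝ) - 1) * xbar) ^ 6 - (1 - (k : ℝ) * xbar) ^ 6 = xbar) :
    6 * (k : ℝ) * (1 - (k : ℝ) * xbar) ^ 5
      - 6 * ((k : ℝ) - 1) * (1 - ((k : ℝ) - 1) * xbar) ^ 5 < -1 := by
  obtain ⟨hx, hxk⟩ := hmem
  have hK2 : (2:ℝ) ≤ (k:ℝ) := by exact_mod_cast hk
  have hK0 : (0:ℝ) < (k:ℝ) := by linarith
  set K := (k:ℝ)
  set a := 1 - (K - 1) * xbar with ha_def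
  set b := 1 - K * xbar with hb_def
  have hb0 : 0 ≤ b := by
    have := (le_div_iff₀ hK0).mp hxk
    simp only [hb_def]
    nlinarith
  have hab : b < a := by
    have : a - b = xbar := by simp only [ha_def, hb_def]; ring
    linarith
  have h2a : 2*a ≤ 1 + b := by
    have h : (1 + b) - 2*a = (K - 2) * xbar := by simp only [ha_def, hb_def]; ring
    nlinarith [mul_nonneg (by linarith : (0:ℝ) ≤ K - 2) hx.le]
  have hS : a^5+a^4*b+a^3*b^2+a^2*b^3+a*b^4+b^5 = 1 := by
    have h0 : xbar * ((a^5+a^4*b+a^3*b^2+a^2*b^3+a*b^4+b^5) - 1) = 0 := by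
      simp only [ha_def, hb_def]
      linear_combination hfix
    rcases mul_eq_zero.mp h0 with h | h
    · exact absurd h (ne_of_gt hx)
    · linarith
  have hT := stmt15_key a b hb0 hab h2a hS
  have hid : (6 * K * b^5 - 6 * (K - 1) * a^5 + 1) * xbar
      = xbar * (7 - 6*(a^4+a^3*b+a^2*b^2+a*b^3+b^4)) := by
    simp only [ha_def, hb_def]
    linear_combination 6 * hfix
  have hneg : xbar * (7 - 6*(a^4+a^3*b+a^2*b^2+a*b^3+b^4)) < 0 :=
    mul_neg_of_pos_of_neg hx (by linarith)
  nlinarith [hid, hneg, hx]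
end

section
/- For integers z ≥ 2, i ≥ 1 and k ≥ i, let x̄ be the unique fixed point of f_{z,i}(x) = (1-(i-1)x)^z - (1-ix)^z in (0,1/i]. Then z(1 - i·x̄)^{z-1} < 1. (This is the eigenvalue bound showing the minor-disease directions at the fixed point y = (x̄, 0,...,0) of the truncated map are contracting.) -/
/-- for the unique fixed point `x̄` of `f_{z,i}` in `(0,1/i]`,
the eigenvalue `z(1 - i x̄)^{z-1}` of the minor-disease directions is `< 1`. -/
theorem stmt_19 (z i k : ℕ) (hz : 2 ≤ z) (hi : 1 ≤ i) (hk : i ≤ k) (xbar : ℝ)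
    (hmem : xbar ∈ Set.Ioc (0 : ℝ) (1 / i))
    (hfix : (1 - ((i : ℝ) - 1) * xbar) ^ z - (1 - (i : ℝ) * xbar) ^ z = xbar) :
    (z : ℝ) * (1 - (i : ℝ) * xbar) ^ (z - 1) < 1 := by
  obtain ⟨hx0, hx1⟩ := hmem
  have hipos : (0:ℝ) < i := by exact_mod_cast hi
  have hb0 : 0 ≤ 1 - (i:ℝ) * xbar := by
    have h1 := (le_div_iff₀ hipos).mp hx1
    nlinarith
  set a := 1 - ((i:ℝ) - 1) * xbar with ha
  set b := 1 - (i:ℝ) * xbar with hbdef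
  have hab : a - b = xbar := by ring
  have hba : b < a := by nlinarith
  rcases eq_or_lt_of_le hb0 with h0 | hbpos
  · rw [← h0, zero_pow (by omega : z - 1 ≠ 0), mul_zero]
    norm_num
  · have h := geom_sum₂_mul a b z
    rw [hab, hfix] at h
    have hsum : (∑ j ∈ Finset.range z, a ^ j * b ^ (z - 1 - j)) = 1 :=
      mul_right_cancel₀ hx0.ne' (by rw [h, one_mul])
    have hlt : (z:ℝ) * b ^ (z-1) < ∑ j ∈ Finset.range z, a ^ j * b ^ (z-1-j) := by
      have hzsum : (z:ℝ) * b ^ (z-1) = ∑ _j ∈ Finset.range z, b ^ (z-1) := by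
        rw [Finset.sum_const, Finset.card_range, nsmul_eq_mul]
      rw [hzsum]
      apply Finset.sum_lt_sum
      · intro j hj
        have hjz : j ≤ z - 1 := by
          have := Finset.mem_range.mp hj; omega
        have hsplit : b ^ (z-1) = b ^ j * b ^ (z-1-j) := by
          rw [← pow_add]; congr 1; omega
        rw [hsplit]
        gcongr
      · refine ⟨1, Finset.mem_range.mpr (by omega), ?_⟩
        have hsplit : b ^ (z-1) = b ^ 1 * b ^ (z-1-1) := by
          rw [← pow_add]; congr 1; omega
        rw [hsplit]
        exact mul_lt_mul_of_pos_right (by simpa using hba) (pow_pos hbpos _)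
    linarith [hsum ▸ hlt]
end
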